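/- arXiv:2502.14863 — 2 statements merged into one kernel-verified Lean document; each statement's English description precedes it below -/
import Mathlib

section
/- Let Z_1,...,Z_n be independent Poisson random variables with Z_j of mean θ/j. Then the conditional law of (Z_1,...,Z_n) given Σ_{j=1}^n j·Z_j = n assigns to each tuple (m_1,...,m_n) with Σ k·m_k = n the probability C(n+θ-1,θ-1)^{-1} · Π_{k=1}^n (θ/k)^{m_k}/m_k!. -/
/-!
Write `w(f) = ∏ₖ (θ/k)^{f k}/(f k)!`. By independence, `P(Z = f) = e^{-θ Hₙ} w(f)`, so the
conditional probability is `w(m) / Bₙ` with `Bⱼ = ∑_{∑ k f k = j} w(f)`. Removing one part of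
size `k` from a tuple shows `k f_k w(f) = θ w(f - eₖ)`; summing over `k` gives
`j Bⱼ = θ ∑_{l<j} B_l` for `j ≤ n`, whose solution is `Bⱼ = θ(θ+1)⋯(θ+j-1)/j!`, and this rising
factorial is `Γ(j+θ)/Γ(θ)`.
-/

open MeasureTheory ProbabilityTheory Finset

section Probability
variable {Ω α : Type*} [MeasurableSpace Ω] {μ : Measure Ω} [MeasurableSpace α]
  [MeasurableSingletonClass α]

lemma ProbabilityTheory.iIndepFun.measure_forall_eq {ι : Type*} [Fintype ι] {X : ι → Ω → α}
    (h : iIndepFun X μ) (x : ι → α) :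
    μ {ω | ∀ i, X i ω = x i} = ∏ i, μ (X i ⁻¹' {x i}) := by
  have : {ω | ∀ i, X i ω = x i} = ⋂ i ∈ univ, X i ⁻¹' {x i} := by ext; simp
  rw [this, h.measure_inter_preimage_eq_mul univ fun i _ => measurableSet_singleton (x i)]

lemma measure_preimage_singleton_of_map_eq {X : Ω → α} (hX : Measurable X) {p : PMF α}
    (h : μ.map X = p.toMeasure) (a : α) : μ (X ⁻¹' {a}) = p a := by
  rw [← Measure.map_apply hX (measurableSet_singleton a), h,
    PMF.toMeasure_apply_singleton p a (measurableSet_singleton a)]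

lemma cond_preimage_singleton_eq {X : Ω → α} (hX : Measurable X) {S : Finset α} {a : α}
    (ha : a ∈ S) : μ[|X ⁻¹' S] (X ⁻¹' {a}) = μ (X ⁻¹' {a}) / ∑ b ∈ S, μ (X ⁻¹' {b}) := by
  rw [cond_apply (hX S.measurableSet) μ,
    Set.inter_eq_self_of_subset_right (Set.preimage_mono (by simpa using ha)),
    sum_measure_preimage_singleton S fun b _ => hX (measurableSet_singleton b),
    ENNReal.div_eq_inv_mul]

end Probability

lemma sub_single_add_single {ι : Type*} [DecidableEq ι] {f : ι → ℕ} {k : ι} (h : f k ≠ 0) :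
    f - Pi.single k 1 + Pi.single k 1 = f := by
  ext i
  rcases eq_or_ne i k with rfl | hik
  · simp only [Pi.add_apply, Pi.sub_apply, Pi.single_eq_same]
    omega
  · simp [Pi.single_eq_of_ne hik]

lemma Real.Gamma_nat_add {θ : ℝ} (hθ : 0 < θ) (n : ℕ) :
    Real.Gamma (n + θ) = (ascPochhammer ℝ n).eval θ * Real.Gamma θ := by
  induction n with
  | zero => simp
  | succ n ih =>
    rw [Nat.cast_succ, add_right_comm, Real.Gamma_add_one (by positivity), ih,
      ascPochhammer_succ_eval]
    ring

namespace Ewens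

variable {n : ℕ}

def weightedSum (f : Fin n → ℕ) : ℕ := ∑ k : Fin n, (k.1 + 1) * f k

lemma weightedSum_add (f g : Fin n → ℕ) :
    weightedSum (f + g) = weightedSum f + weightedSum g := by
  simp only [weightedSum, Pi.add_apply, mul_add, sum_add_distrib]

lemma weightedSum_single (k : Fin n) (c : ℕ) : weightedSum (Pi.single k c) = (k.1 + 1) * c := by
  simp [weightedSum, Pi.single_apply]

lemma mul_le_weightedSum (f : Fin n → ℕ) (k : Fin n) : (k.1 + 1) * f k ≤ weightedSum f :=
  single_le_sum (f := fun i : Fin n => (i.1 + 1) * f i) (fun _ _ => Nat.zero_le _) (mem_univ k)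

/-- Bounding the entries by `j` is harmless, since `f k ≤ (k + 1) f k ≤ j`. -/
def tuplesOfWeight (n j : ℕ) : Finset (Fin n → ℕ) :=
  (Fintype.piFinset fun _ => range (j + 1)).filter fun f => weightedSum f = j

lemma mem_tuplesOfWeight {j : ℕ} {f : Fin n → ℕ} :
    f ∈ tuplesOfWeight n j ↔ weightedSum f = j := by
  refine ⟨fun h => (mem_filter.mp h).2, fun h => mem_filter.mpr ⟨?_, h⟩⟩
  refine Fintype.mem_piFinset.mpr fun k => mem_range.mpr ?_
  have := mul_le_weightedSum f k
  nlinarith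

noncomputable def weight (θ : ℝ) (f : Fin n → ℕ) : ℝ :=
  ∏ k : Fin n, (θ / (k.1 + 1)) ^ f k / (f k).factorial

noncomputable def weightSum (θ : ℝ) (n j : ℕ) : ℝ := ∑ f ∈ tuplesOfWeight n j, weight θ f

lemma weight_nonneg {θ : ℝ} (hθ : 0 ≤ θ) (f : Fin n → ℕ) : 0 ≤ weight θ f :=
  prod_nonneg fun _ _ => by positivity

lemma weight_add_single_mul (θ : ℝ) (g : Fin n → ℕ) (k : Fin n) :
    weight θ (g + Pi.single k 1) * ((k.1 + 1) * (g k + 1)) = θ * weight θ g := by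
  set f : Fin n → ℕ := g + Pi.single k 1
  have factor : ∀ i, (θ / (i.1 + 1)) ^ f i / (f i).factorial
      * (Pi.mulSingle k (((k.1 : ℝ) + 1) * (g k + 1)) : Fin n → ℝ) i
      = (Pi.mulSingle k θ : Fin n → ℝ) i * ((θ / (i.1 + 1)) ^ g i / (g i).factorial) := by
    intro i
    rcases eq_or_ne i k with rfl | hik
    · have hi : ((i.1 : ℝ) + 1) ≠ 0 := by positivity
      simp only [f, Pi.add_apply, Pi.single_eq_same, Pi.mulSingle_eq_same, Nat.factorial_succ,
        pow_succ, Nat.cast_mul, Nat.cast_add, Nat.cast_one]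
      field_simp
    · simp [f, Pi.single_eq_of_ne hik, Pi.mulSingle_eq_of_ne hik]
  simpa [weight, prod_mul_distrib, Fintype.prod_pi_mulSingle'] using
    Fintype.prod_congr _ _ factor

lemma sum_coord_mul_weight (θ : ℝ) {j : ℕ} (k : Fin n) (hk : k.1 + 1 ≤ j) :
    ∑ f ∈ tuplesOfWeight n j, ((k.1 + 1) * f k : ℝ) * weight θ f
      = θ * weightSum θ n (j - (k.1 + 1)) := by
  have hws : ∀ g : Fin n → ℕ, weightedSum (g + Pi.single k 1) = weightedSum g + (k.1 + 1) := by
    intro g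
    rw [weightedSum_add, weightedSum_single, mul_one]
  rw [← sum_filter_of_ne (p := fun f => f k ≠ 0) fun f _ h => by contrapose! h; simp [h],
    weightSum, mul_sum]
  refine sum_nbij' (fun f => f - Pi.single k 1) (fun g => g + Pi.single k 1) ?_ ?_ ?_ ?_ ?_
  · intro f hf
    rw [mem_filter, mem_tuplesOfWeight] at hf
    have := hws (f - Pi.single k 1)
    rw [sub_single_add_single hf.2] at this
    rw [mem_tuplesOfWeight]
    omega
  · intro g hg
    rw [mem_tuplesOfWeight] at hg
    simp only [mem_filter, mem_tuplesOfWeight, hws, hg, Pi.add_apply, Pi.single_eq_same]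
    omega
  · intro f hf
    exact sub_single_add_single (mem_filter.mp hf).2
  · intro g _
    exact add_tsub_cancel_right g _
  · intro f hf
    have hfk : (((f - Pi.single k 1 : Fin n → ℕ) k : ℕ) : ℝ) + 1 = f k := by
      have := (mem_filter.mp hf).2
      simp only [Pi.sub_apply, Pi.single_eq_same]
      norm_cast
      omega
    rw [← weight_add_single_mul, hfk, sub_single_add_single (mem_filter.mp hf).2]
    ring

lemma sum_coord_mul_weight_of_lt (θ : ℝ) {j : ℕ} (k : Fin n) (hk : j < k.1 + 1) :
    ∑ f ∈ tuplesOfWeight n j, ((k.1 + 1) * f k : ℝ) * weight θ f = 0 := by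
  refine sum_eq_zero fun f hf => ?_
  have hle := mul_le_weightedSum f k
  rw [mem_tuplesOfWeight.mp hf] at hle
  have : f k = 0 := by nlinarith
  simp [this]

lemma weightSum_zero (θ : ℝ) (n : ℕ) : weightSum θ n 0 = 1 := by
  have : tuplesOfWeight n 0 = {0} := by
    ext f
    refine ⟨fun hf => mem_singleton.mpr (funext fun k => ?_), fun hf => ?_⟩
    · have hle := mul_le_weightedSum f k
      rw [mem_tuplesOfWeight.mp hf] at hle
      simpa using hle
    · rw [mem_singleton.mp hf, mem_tuplesOfWeight]
      simp [weightedSum]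
  simp [weightSum, this, weight]

lemma natCast_mul_weightSum (θ : ℝ) {j : ℕ} (hj : j ≤ n) :
    j * weightSum θ n j = θ * ∑ l ∈ range j, weightSum θ n l := by
  have hshift : ∀ k : Fin n, ∑ f ∈ tuplesOfWeight n j, ((k.1 + 1) * f k : ℝ) * weight θ f
      = if k.1 < j then θ * weightSum θ n (j - 1 - k.1) else 0 := by
    intro k
    split_ifs with hk
    · rw [sum_coord_mul_weight θ k hk, Nat.sub_sub, add_comm 1]
    · exact sum_coord_mul_weight_of_lt θ k (by omega)
  calc (j : ℝ) * weightSum θ n j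
      = ∑ f ∈ tuplesOfWeight n j, (∑ k : Fin n, ((k.1 + 1) * f k : ℝ)) * weight θ f := by
        rw [weightSum, mul_sum]
        refine sum_congr rfl fun f hf => ?_
        rw [← mem_tuplesOfWeight.mp hf, weightedSum]
        push_cast
        rfl
    _ = ∑ k : Fin n, if k.1 < j then θ * weightSum θ n (j - 1 - k.1) else 0 := by
        simp only [sum_mul, ← hshift]
        exact sum_comm
    _ = ∑ k ∈ range j, θ * weightSum θ n (j - 1 - k) := by
        rw [Fin.sum_univ_eq_sum_range
            (fun k => if k < j then θ * weightSum θ n (j - 1 - k) else 0),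
          ← sum_range_add_sum_Ico _ hj,
          sum_eq_zero (s := Ico j n) fun k hk => if_neg (by simp at hk; omega), add_zero]
        exact sum_congr rfl fun k hk => if_pos (mem_range.mp hk)
    _ = θ * ∑ l ∈ range j, weightSum θ n l := by
        rw [← mul_sum, sum_range_reflect (weightSum θ n) j]

lemma mul_sum_ascPochhammer_div_factorial (θ : ℝ) (j : ℕ) :
    θ * ∑ l ∈ range j, (ascPochhammer ℝ l).eval θ / l.factorial
      = j * ((ascPochhammer ℝ j).eval θ / j.factorial) := by
  induction j with
  | zero => simp
  | succ j ih =>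
    rw [sum_range_succ, mul_add, ih, ascPochhammer_succ_eval, Nat.factorial_succ]
    push_cast
    field_simp
    ring

theorem weightSum_eq_ascPochhammer (θ : ℝ) {j : ℕ} (hj : j ≤ n) :
    weightSum θ n j = (ascPochhammer ℝ j).eval θ / j.factorial := by
  induction j using Nat.strong_induction_on with
  | _ j ih =>
    rcases Nat.eq_zero_or_pos j with rfl | hj0
    · simp [weightSum_zero]
    · have hrec := natCast_mul_weightSum θ hj
      rw [sum_congr rfl fun l hl => ih l (mem_range.mp hl) (by simp at hl; omega),
        mul_sum_ascPochhammer_div_factorial] at hrec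
      exact mul_left_cancel₀ (by positivity) hrec

lemma measure_eq_exp_mul_weight {Ω : Type*} [MeasurableSpace Ω] {μ : Measure Ω} {θ : ℝ}
    (hθ : 0 ≤ θ) {n : ℕ} {Z : Fin n → Ω → ℕ} (hmeas : ∀ j, Measurable (Z j))
    (hindep : iIndepFun Z μ)
    (hlaw : ∀ j : Fin n,
      Measure.map (Z j) μ = (poissonPMF (Real.toNNReal (θ / (j.1 + 1)))).toMeasure)
    (f : Fin n → ℕ) :
    μ {ω | ∀ k, Z k ω = f k}
      = ENNReal.ofReal ((∏ k : Fin n, Real.exp (-(θ / (k.1 + 1)))) * weight θ f) := by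
  rw [hindep.measure_forall_eq,
    prod_congr rfl fun k _ => measure_preimage_singleton_of_map_eq (hmeas k) (hlaw k) (f k),
    weight, ← prod_mul_distrib, ENNReal.ofReal_prod_of_nonneg fun k _ => by positivity]
  refine prod_congr rfl fun k _ => ?_
  rw [← poissonPMFReal_ofReal_eq_poissonPMF, poissonPMFReal,
    Real.coe_toNNReal _ (by positivity), mul_div_assoc]

end Ewens

theorem conditioned_poisson_eq_ewens_general
    {Ω : Type*} [MeasurableSpace Ω] (μ : Measure Ω)
    (θ : ℝ) (hθ : 0 < θ) (n : ℕ) (Z : Fin n → Ω → ℕ)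
    (hmeas : ∀ j, Measurable (Z j))
    (hindep : iIndepFun Z μ)
    (hlaw : ∀ j : Fin n,
      Measure.map (Z j) μ = (poissonPMF (Real.toNNReal (θ / (j.1 + 1)))).toMeasure)
    (m : Fin n → ℕ) (hm : ∑ k : Fin n, (k.1 + 1) * m k = n) :
    (μ[|{ω | ∑ j : Fin n, (j.1 + 1) * Z j ω = n}]) {ω | ∀ k, Z k ω = m k}
      = ENNReal.ofReal
          ((Real.Gamma θ * n.factorial / Real.Gamma (n + θ)) *
            ∏ k : Fin n, (θ / (k.1 + 1)) ^ (m k) / ((m k).factorial : ℝ)) := by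
  set V : Ω → Fin n → ℕ := fun ω k => Z k ω
  have hfiber : ∀ f, V ⁻¹' {f} = {ω | ∀ k, Z k ω = f k} := fun f => by
    ext ω
    simp [V, funext_iff]
  have hB : {ω | ∑ j : Fin n, (j.1 + 1) * Z j ω = n} = V ⁻¹' Ewens.tuplesOfWeight n n := by
    ext ω
    simp [V, Ewens.mem_tuplesOfWeight, Ewens.weightedSum]
  set E := ∏ k : Fin n, Real.exp (-(θ / (k.1 + 1)))
  have hE : 0 < E := prod_pos fun _ _ => Real.exp_pos _
  have hpoint : ∀ f, μ (V ⁻¹' {f}) = ENNReal.ofReal (E * Ewens.weight θ f) := fun f => by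
    rw [hfiber, Ewens.measure_eq_exp_mul_weight hθ.le hmeas hindep hlaw]
  rw [hB, ← hfiber, cond_preimage_singleton_eq (measurable_pi_lambda V hmeas)
      (Ewens.mem_tuplesOfWeight.mpr hm), hpoint, sum_congr rfl fun f _ => hpoint f,
    ← ENNReal.ofReal_sum_of_nonneg fun f _ => by positivity [Ewens.weight_nonneg hθ.le f],
    ← mul_sum, ← Ewens.weightSum, Ewens.weightSum_eq_ascPochhammer θ le_rfl,
    ← ENNReal.ofReal_div_of_pos (by positivity [ascPochhammer_pos n θ hθ]),
    Real.Gamma_nat_add hθ, Ewens.weight]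
  have hΓ := Real.Gamma_pos_of_pos hθ
  have hasc := ascPochhammer_pos n θ hθ
  congr 1
  field_simp

/-- The conditional law of independent `Z_j ~ Poisson(θ/j)`, `1 ≤ j ≤ n`, given
`∑ j Z_j = n`, is the Ewens sampling formula: it assigns to each `(m_1,…,m_n)` with
`∑ k m_k = n` the probability `C(n+θ-1,θ-1)⁻¹ ∏ (θ/k)^{m_k}/m_k!`, where
`C(n+θ-1,θ-1) = Γ(n+θ)/(Γ(θ) n!)`. -/
theorem conditioned_poisson_eq_ewens
    {Ω : Type*} [MeasurableSpace Ω] (μ : Measure Ω) [IsProbabilityMeasure μ]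
    (θ : ℝ) (hθ : 0 < θ) (n : ℕ) (hn : 1 ≤ n) (Z : Fin n → Ω → ℕ)
    (hmeas : ∀ j, Measurable (Z j))
    (hindep : iIndepFun Z μ)
    (hlaw : ∀ j : Fin n,
      Measure.map (Z j) μ = (poissonPMF (Real.toNNReal (θ / (j.1 + 1)))).toMeasure)
    (m : Fin n → ℕ) (hm : ∑ k : Fin n, (k.1 + 1) * m k = n) :
    (μ[|{ω | ∑ j : Fin n, (j.1 + 1) * Z j ω = n}]) {ω | ∀ k, Z k ω = m k}
      = ENNReal.ofReal
          ((Real.Gamma θ * n.factorial / Real.Gamma (n + θ)) *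
            ∏ k : Fin n, (θ / (k.1 + 1)) ^ (m k) / ((m k).factorial : ℝ)) :=
  conditioned_poisson_eq_ewens_general μ θ hθ n Z hmeas hindep hlaw m hm
end

section
/- With r_k = e^{−m/(2n_k)} and n_k → ∞, the ratio n_k^{−θ}·exp(θ·V_{n_k}(r_k)/2) converges to e^{θγ}·∫_0^∞ e^{−my} p_θ(y) dy, where V_n(r) = 2Σ_{ℓ=1}^n r^{2ℓ}/ℓ and γ is the Euler–Mascheroni constant. -/
/-!
Evaluating the generating function of `T_{0n}` at `z = e^{-m/n}` gives the exact identity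
`n^{-θ} exp(θ V_n(e^{-m/(2n)})/2) = exp(θ (H_n - log n)) · E[e^{-m T_{0n}/n}]`.
The first factor tends to `e^{θγ}`; the second is the integral of the bounded continuous
function `y ↦ e^{-m max(y, 0)}` against the law of `T_{0n}/n`, so it tends to the Laplace
transform of `p_θ` at `m` by weak convergence.
-/

open MeasureTheory Filter Set

lemma exp_neg_div_two_mul_pow_two_mul (a : ℝ) (n ℓ : ℕ) :
    Real.exp (-(a / (2 * n))) ^ (2 * ℓ) = Real.exp (-(a / n)) ^ ℓ := by
  rw [← Real.exp_nat_mul, ← Real.exp_nat_mul]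
  push_cast
  ring_nf

lemma integral_pow_eq_tsum (μ : Measure ℕ) [IsFiniteMeasure μ] {z : ℝ} (hz : |z| ≤ 1) :
    ∫ k, z ^ k ∂μ = ∑' k : ℕ, z ^ k * (μ {k}).toReal := by
  have hint : Integrable (fun k : ℕ => z ^ k) μ :=
    (integrable_const (1 : ℝ)).mono' measurable_from_top.aestronglyMeasurable
      (.of_forall fun k => by
        rw [Real.norm_eq_abs, abs_pow]
        exact pow_le_one₀ (abs_nonneg z) hz)
  rw [integral_countable hint]
  exact tsum_congr fun k => by rw [smul_eq_mul, mul_comm, measureReal_def]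

lemma rpow_neg_mul_exp_sum_eq (θ z : ℝ) {n : ℕ} (hn : 0 < n) :
    (n : ℝ) ^ (-θ) * Real.exp (θ * ∑ ℓ ∈ Finset.Icc 1 n, z ^ ℓ / ℓ)
      = Real.exp (θ * (harmonic n - Real.log n)) *
          ∏ j ∈ Finset.Icc 1 n, Real.exp ((θ / j) * (z ^ j - 1)) := by
  have hsum : ∑ j ∈ Finset.Icc 1 n, (θ / j) * (z ^ j - 1)
      = θ * ∑ j ∈ Finset.Icc 1 n, z ^ j / j - θ * harmonic n := by
    rw [harmonic_eq_sum_Icc]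
    push_cast
    rw [Finset.mul_sum, Finset.mul_sum, ← Finset.sum_sub_distrib]
    exact Finset.sum_congr rfl fun j _ => by ring
  rw [← Real.exp_sum, hsum, Real.rpow_def_of_pos (by exact_mod_cast hn), ← Real.exp_add,
    ← Real.exp_add]
  ring_nf

lemma exp_neg_mul_max_div_natCast (m : ℝ) (n k : ℕ) :
    Real.exp (-(m * max ((k : ℝ) / n) 0)) = Real.exp (-(m / n)) ^ k := by
  rw [max_eq_left (by positivity), ← Real.exp_nat_mul]
  ring_nf

lemma abs_exp_neg_mul_max_le_one {m : ℝ} (hm : 0 ≤ m) (y : ℝ) :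
    |Real.exp (-(m * max y 0))| ≤ 1 := by
  rw [abs_of_pos (Real.exp_pos _), Real.exp_le_one_iff, neg_nonpos]
  exact mul_nonneg hm (le_max_right _ _)

lemma rpow_neg_mul_exp_eq_integral (θ : ℝ) {m : ℝ} (hm : 0 ≤ m) (μ : Measure ℕ)
    [IsFiniteMeasure μ] {n : ℕ} (hn : 0 < n)
    (hpgf : ∀ z ∈ Ioc (0 : ℝ) 1, ∑' k : ℕ, z ^ k * (μ {k}).toReal
        = ∏ j ∈ Finset.Icc 1 n, Real.exp ((θ / j) * (z ^ j - 1))) :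
    (n : ℝ) ^ (-θ) *
        Real.exp (θ * (2 * ∑ ℓ ∈ Finset.Icc 1 n,
          Real.exp (-(m / (2 * n))) ^ (2 * ℓ) / ℓ) / 2)
      = Real.exp (θ * (harmonic n - Real.log n)) *
          ∫ k, Real.exp (-(m * max ((k : ℝ) / n) 0)) ∂μ := by
  have hz : Real.exp (-(m / n)) ∈ Ioc (0 : ℝ) 1 :=
    ⟨Real.exp_pos _, Real.exp_le_one_iff.2 (neg_nonpos.2 (by positivity))⟩
  simp only [exp_neg_div_two_mul_pow_two_mul, exp_neg_mul_max_div_natCast]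
  rw [integral_pow_eq_tsum μ ((abs_of_pos hz.1).trans_le hz.2), hpgf _ hz,
    ← rpow_neg_mul_exp_sum_eq θ _ hn]
  ring_nf

theorem normalized_variance_tendsto_general (θ : ℝ) (m : ℝ) (hm : 0 ≤ m)
    (μT : ℕ → Measure ℕ) (hprob : ∀ n, IsProbabilityMeasure (μT n))
    (hpgf : ∀ n : ℕ, 1 ≤ n → ∀ z ∈ Set.Ioc (0 : ℝ) 1,
      ∑' k : ℕ, z ^ k * (μT n {k}).toReal
        = ∏ j ∈ Finset.Icc 1 n, Real.exp ((θ / j) * (z ^ j - 1)))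
    (p : ℝ → ℝ)
    (hweak : ∀ f : ℝ → ℝ, Continuous f → (∃ Cb, ∀ x, |f x| ≤ Cb) →
      Tendsto (fun n : ℕ => ∫ k, f ((k : ℝ) / n) ∂(μT n)) atTop
        (nhds (∫ y in Set.Ioi (0 : ℝ), f y * p y)))
    (nk : ℕ → ℕ) (hnk : Tendsto nk atTop atTop) :
    Tendsto
      (fun k : ℕ =>
        ((nk k : ℝ)) ^ (-θ) *
          Real.exp (θ *
            (2 * ∑ ℓ ∈ Finset.Icc 1 (nk k),
              (Real.exp (-(m / (2 * (nk k : ℝ))))) ^ (2 * ℓ) / ℓ) / 2))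
      atTop
      (nhds (Real.exp (θ * Real.eulerMascheroniConstant) *
        ∫ y in Set.Ioi (0 : ℝ), Real.exp (-(m * y)) * p y)) := by
  set f : ℝ → ℝ := fun y => Real.exp (-(m * max y 0))
  have hf : Continuous f := by fun_prop
  have hlaplace := (hweak f hf ⟨1, abs_exp_neg_mul_max_le_one hm⟩).comp hnk
  have hharmonic := (Real.continuous_exp.tendsto _).comp
    ((Real.tendsto_harmonic_sub_log.const_mul θ).comp hnk)
  have hlimit : ∫ y in Ioi 0, f y * p y = ∫ y in Ioi 0, Real.exp (-(m * y)) * p y :=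
    setIntegral_congr_fun measurableSet_Ioi fun y hy => by
      simp only [f, max_eq_left (mem_Ioi.1 hy).le]
  rw [← hlimit]
  refine (hharmonic.mul hlaplace).congr' ?_
  filter_upwards [hnk.eventually_ge_atTop 1] with k hk
  exact (rpow_neg_mul_exp_eq_integral θ hm (μT (nk k)) hk (hpgf _ hk)).symm

/-- With `r_k = e^{−m/(2n_k)}` and `n_k → ∞`, the quantity
`n_k^{−θ} exp(θ V_{n_k}(r_k)/2)` converges to `e^{θγ} ∫_0^∞ e^{−my} p_θ(y) dy`,
where `V_n(r) = 2 ∑_{ℓ=1}^n r^{2ℓ}/ℓ`, `γ` is the Euler–Mascheroni constant, and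
`p_θ` is the limiting density of `T_{0n}/n` for the Ewens/Poisson model. -/
theorem normalized_variance_tendsto (θ : ℝ) (hθ : 0 < θ) (m : ℝ) (hm : 0 ≤ m)
    (μT : ℕ → Measure ℕ) (hprob : ∀ n, IsProbabilityMeasure (μT n))
    (hpgf : ∀ n : ℕ, 1 ≤ n → ∀ z ∈ Set.Ioc (0 : ℝ) 1,
      ∑' k : ℕ, z ^ k * (μT n {k}).toReal
        = ∏ j ∈ Finset.Icc 1 n, Real.exp ((θ / j) * (z ^ j - 1)))
    (p : ℝ → ℝ) (hpmeas : Measurable p) (hp0 : ∀ y, 0 ≤ p y)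
    (hweak : ∀ f : ℝ → ℝ, Continuous f → (∃ Cb, ∀ x, |f x| ≤ Cb) →
      Tendsto (fun n : ℕ => ∫ k, f ((k : ℝ) / n) ∂(μT n)) atTop
        (nhds (∫ y in Set.Ioi (0 : ℝ), f y * p y)))
    (nk : ℕ → ℕ) (hnk : Tendsto nk atTop atTop) :
    Tendsto
      (fun k : ℕ =>
        ((nk k : ℝ)) ^ (-θ) *
          Real.exp (θ *
            (2 * ∑ ℓ ∈ Finset.Icc 1 (nk k),
              (Real.exp (-(m / (2 * (nk k : ℝ))))) ^ (2 * ℓ) / ℓ) / 2))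
      atTop
      (nhds (Real.exp (θ * Real.eulerMascheroniConstant) *
        ∫ y in Set.Ioi (0 : ℝ), Real.exp (-(m * y)) * p y)) :=
  normalized_variance_tendsto_general θ m hm μT hprob hpgf p hweak nk hnk
end
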